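/- arXiv:2211.01280 — 4 statements merged into one kernel-verified Lean document; each statement's English description precedes it below -/
import Mathlib

section
/- For any points x, x', x* in a real inner product space E, one has | ‖x'−x*‖³ − ‖x−x*‖³ − 3⟨x'−x, x'−x*⟩‖x'−x*‖ | ≤ 6‖x'−x‖²‖x'−x*‖ + 3‖x'−x‖³. -/
open scoped RealInnerProductSpace

/-!
Put `u = x' - x*`, `v = x - x*`, so that `x' - x = u - v`. By polarization the inner product
`⟪u - v, u⟫` is a function of `‖u‖`, `‖v‖`, `‖u - v‖`, and the Taylor remainder becomes the
explicit nonpositive expression `-((‖u‖ - ‖v‖)² (‖u‖ + 2‖v‖) + 3 ‖u‖ ‖u - v‖²) / 2`.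
The reverse triangle inequality `|‖u‖ - ‖v‖| ≤ ‖u - v‖` then bounds its size by
`3 ‖u‖ ‖u - v‖² + ‖u - v‖³`, which is sharper than the claimed bound.
-/

section

variable {E : Type*} [NormedAddCommGroup E] [InnerProductSpace ℝ E]

lemma real_inner_sub_self_eq (u v : E) :
    ⟪u - v, u⟫ = (‖u‖ ^ 2 - ‖v‖ ^ 2 + ‖u - v‖ ^ 2) / 2 := by
  have h := norm_sub_sq_real u (u - v)
  rw [sub_sub_cancel, real_inner_comm] at h
  linarith

lemma norm_cube_sub_norm_cube_sub_taylor_eq (u v : E) :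
    ‖u‖ ^ 3 - ‖v‖ ^ 3 - 3 * ⟪u - v, u⟫ * ‖u‖
      = -((‖u‖ - ‖v‖) ^ 2 * (‖u‖ + 2 * ‖v‖) + 3 * ‖u‖ * ‖u - v‖ ^ 2) / 2 := by
  rw [real_inner_sub_self_eq]
  ring

lemma abs_norm_cube_sub_norm_cube_sub_taylor_le (u v : E) :
    |‖u‖ ^ 3 - ‖v‖ ^ 3 - 3 * ⟪u - v, u⟫ * ‖u‖|
      ≤ 3 * ‖u‖ * ‖u - v‖ ^ 2 + ‖u - v‖ ^ 3 := by
  have hsq : (‖u‖ - ‖v‖) ^ 2 ≤ ‖u - v‖ ^ 2 :=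
    sq_le_sq.mpr ((abs_norm_sub_norm_le u v).trans (le_abs_self _))
  have hv : ‖u‖ + 2 * ‖v‖ ≤ 3 * ‖u‖ + 2 * ‖u - v‖ := by
    linarith [norm_le_norm_add_norm_sub u v]
  rw [norm_cube_sub_norm_cube_sub_taylor_eq, abs_div, abs_neg, abs_two,
    abs_of_nonneg (by positivity)]
  calc ((‖u‖ - ‖v‖) ^ 2 * (‖u‖ + 2 * ‖v‖) + 3 * ‖u‖ * ‖u - v‖ ^ 2) / 2
      ≤ (‖u - v‖ ^ 2 * (3 * ‖u‖ + 2 * ‖u - v‖) + 3 * ‖u‖ * ‖u - v‖ ^ 2) / 2 := by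
        gcongr
    _ = 3 * ‖u‖ * ‖u - v‖ ^ 2 + ‖u - v‖ ^ 3 := by ring

end

/-- First-order Taylor expansion of `y ↦ ‖y − x*‖³` centered at `x'`, with an
explicit Lagrange-type remainder bound. -/
theorem norm_cube_taylor_remainder
    {E : Type*} [NormedAddCommGroup E] [InnerProductSpace ℝ E]
    (x x' xstar : E) :
    |‖x' - xstar‖ ^ 3 - ‖x - xstar‖ ^ 3
        - 3 * ⟪x' - x, x' - xstar⟫ * ‖x' - xstar‖|
      ≤ 6 * ‖x' - x‖ ^ 2 * ‖x' - xstar‖ + 3 * ‖x' - x‖ ^ 3 := by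
  have h := abs_norm_cube_sub_norm_cube_sub_taylor_le (x' - xstar) (x - xstar)
  rw [sub_sub_sub_cancel_right] at h
  refine h.trans ?_
  have ha := norm_nonneg (x' - xstar)
  have ht := norm_nonneg (x' - x)
  linarith [mul_nonneg ha (pow_nonneg ht 2), pow_nonneg ht 3]
end

section
/- Let a_1, …, a_n > 0 with Σ_i a_i = 1, let c_1, …, c_n be real numbers, set Z = Σ_j a_j e^{−c_j} and a'_i = a_i e^{−c_i}/Z. Let φ_1, …, φ_n ≥ 0 and φ'_1, …, φ'_n ≥ 0 be weights, set ā = Σ_i φ_i a_i, ā' = Σ_i φ'_i a'_i, and u_i = φ'_i a'_i / ā'. Suppose m > 0 satisfies ā ≥ m and Σ_i φ'_i a_i ≥ m, and ā' > 0. Then | Σ_i u_i log( (a'_i/ā') / (a_i/ā) ) | ≤ (1/m)·| Σ_i (φ'_i − φ_i) a_i | + Σ_i u_i (e^{c_i} − 1 − c_i). -/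
/-!
Writing `B = Z ā' = ∑ φ'ᵢ aᵢ e^{-cᵢ}` and `A = ∑ φ'ᵢ aᵢ`, every log-ratio equals
`log (ā / B) - cᵢ`, and `∑ uᵢ e^{cᵢ} = A / B`. Since `∑ uᵢ = 1`, the sum splits as
`(log ā - log A) + (log ∑ uᵢ e^{cᵢ} - ∑ uᵢ cᵢ)`: the first term is controlled by the mean value
estimate for `log` on `[m, ∞)`, the second lies between `0` (Jensen for `exp`) and
`∑ uᵢ (e^{cᵢ} - 1 - cᵢ)` (from `log x ≤ x - 1`).
-/

open Finset Real

namespace Real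

theorem abs_log_sub_log_le_abs_sub_div {m x y : ℝ} (hm : 0 < m) (hx : m ≤ x) (hy : m ≤ y) :
    |log x - log y| ≤ |x - y| / m := by
  wlog hyx : y ≤ x generalizing x y
  · rw [abs_sub_comm, abs_sub_comm x]
    exact this hy hx (le_of_not_ge hyx)
  have hy0 : 0 < y := hm.trans_le hy
  have hx0 : 0 < x := hy0.trans_le hyx
  rw [abs_of_nonneg (sub_nonneg.2 (log_le_log hy0 hyx)), abs_of_nonneg (sub_nonneg.2 hyx)]
  calc log x - log y = log (x / y) := (log_div hx0.ne' hy0.ne').symm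
    _ ≤ x / y - 1 := log_le_sub_one_of_pos (by positivity)
    _ = (x - y) / y := by field_simp
    _ ≤ (x - y) / m := by gcongr

section WeightedLogSumExp

variable {ι : Type*} {s : Finset ι} {u c : ι → ℝ}

theorem exp_sum_mul_le_sum_mul_exp (hu : ∀ i ∈ s, 0 ≤ u i) (hu₁ : ∑ i ∈ s, u i = 1) :
    exp (∑ i ∈ s, u i * c i) ≤ ∑ i ∈ s, u i * exp (c i) :=
  convexOn_exp.map_sum_le hu hu₁ fun i _ => Set.mem_univ (c i)

theorem sum_mul_le_log_sum_mul_exp (hu : ∀ i ∈ s, 0 ≤ u i) (hu₁ : ∑ i ∈ s, u i = 1) :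
    ∑ i ∈ s, u i * c i ≤ log (∑ i ∈ s, u i * exp (c i)) := by
  have hJensen := exp_sum_mul_le_sum_mul_exp (c := c) hu hu₁
  exact (le_log_iff_exp_le ((exp_pos _).trans_le hJensen)).2 hJensen

theorem log_sum_mul_exp_sub_sum_mul_le (hu : ∀ i ∈ s, 0 ≤ u i) (hu₁ : ∑ i ∈ s, u i = 1) :
    log (∑ i ∈ s, u i * exp (c i)) - ∑ i ∈ s, u i * c i
      ≤ ∑ i ∈ s, u i * (exp (c i) - 1 - c i) := by
  have hpos : 0 < ∑ i ∈ s, u i * exp (c i) :=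
    (exp_pos _).trans_le (exp_sum_mul_le_sum_mul_exp hu hu₁)
  have hlog := log_le_sub_one_of_pos hpos
  simp only [mul_sub, mul_one, sum_sub_distrib, hu₁]
  linarith

end WeightedLogSumExp

end Real

section MultiplicativeWeights

variable {ι : Type*} {a c φ' : ι → ℝ} {Z abar abar' : ℝ}

theorem log_mw_ratio {i : ι} (ha : a i ≠ 0) (hZ : Z ≠ 0) (habar : abar ≠ 0)
    (habar' : abar' ≠ 0) :
    log ((a i * exp (-c i) / Z / abar') / (a i / abar)) = log (abar / (Z * abar')) - c i := by
  have hratio : (a i * exp (-c i) / Z / abar') / (a i / abar)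
      = abar / (Z * abar') * exp (-c i) := by
    field_simp
  rw [hratio, log_mul (by positivity) (exp_pos _).ne', log_exp, sub_eq_add_neg]

theorem sum_mul_log_mw_ratio [Fintype ι] {a' u : ι → ℝ} (ha : ∀ i, a i ≠ 0) (hZ : Z ≠ 0)
    (habar : abar ≠ 0) (habar' : abar' ≠ 0) (ha' : ∀ i, a' i = a i * exp (-c i) / Z)
    (hu₁ : ∑ i, u i = 1) :
    ∑ i, u i * log ((a' i / abar') / (a i / abar))
      = log (abar / (Z * abar')) - ∑ i, u i * c i := by
  simp only [ha', log_mw_ratio (ha _) hZ habar habar', mul_sub, sum_sub_distrib, ← sum_mul, hu₁,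
    one_mul]

theorem sum_mw_localized_mul_exp (s : Finset ι) :
    ∑ i ∈ s, φ' i * (a i * exp (-c i) / Z) / abar' * exp (c i)
      = (∑ i ∈ s, φ' i * a i) / (Z * abar') := by
  rw [sum_div]
  refine sum_congr rfl fun i _ => ?_
  rw [exp_neg]
  field_simp

end MultiplicativeWeights

theorem mw_relative_entropy_bound_general
    {n : ℕ} (a c φ φ' : Fin n → ℝ)
    (ha : ∀ i, 0 < a i)
    (Z : ℝ) (hZ : Z = ∑ j, a j * Real.exp (-c j))
    (a' : Fin n → ℝ) (ha' : ∀ i, a' i = a i * Real.exp (-c i) / Z)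
    (hφ' : ∀ i, 0 ≤ φ' i)
    (abar abar' : ℝ)
    (habar_def : abar = ∑ i, φ i * a i) (habar'_def : abar' = ∑ i, φ' i * a' i)
    (u : Fin n → ℝ) (hu : ∀ i, u i = φ' i * a' i / abar')
    (m : ℝ) (hm : 0 < m) (habar_ge : m ≤ abar) (hφ'a_ge : m ≤ ∑ i, φ' i * a i)
    (habar' : 0 < abar') :
    |∑ i, u i * Real.log ((a' i / abar') / (a i / abar))|
      ≤ (1 / m) * |∑ i, (φ' i - φ i) * a i|
        + ∑ i, u i * (Real.exp (c i) - 1 - c i) := by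
  have hZ₀ : 0 < Z := hZ ▸ sum_pos (fun i _ => mul_pos (ha i) (exp_pos _))
    (nonempty_of_sum_ne_zero (habar'_def ▸ habar'.ne'))
  have habar₀ : 0 < abar := hm.trans_le habar_ge
  have hu₀ : ∀ i ∈ univ, 0 ≤ u i := fun i _ => by
    rw [hu, ha']; have := hφ' i; have := ha i; positivity
  have hu₁ : ∑ i, u i = 1 := by
    simp only [hu, ← sum_div, ← habar'_def, div_self habar'.ne']
  set A := ∑ i, φ' i * a i
  set B := Z * abar'
  have hA₀ : 0 < A := hm.trans_le hφ'a_ge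
  have hB₀ : 0 < B := mul_pos hZ₀ habar'
  have hexp : ∑ i, u i * exp (c i) = A / B := by
    simp only [hu, ha']
    exact sum_mw_localized_mul_exp univ
  have hsplit : ∑ i, u i * log ((a' i / abar') / (a i / abar))
      = (log abar - log A) + (log (∑ i, u i * exp (c i)) - ∑ i, u i * c i) := by
    rw [sum_mul_log_mw_ratio (fun i => (ha i).ne') hZ₀.ne' habar₀.ne' habar'.ne' ha' hu₁, hexp,
      log_div habar₀.ne' hB₀.ne', log_div hA₀.ne' hB₀.ne']
    ring
  have hA_sub : |abar - A| = |∑ i, (φ' i - φ i) * a i| := by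
    rw [abs_sub_comm, habar_def, ← sum_sub_distrib]
    simp only [sub_mul]
  have hlog := abs_log_sub_log_le_abs_sub_div hm habar_ge hφ'a_ge
  have hgap₀ := sub_nonneg.2 (sum_mul_le_log_sum_mul_exp (c := c) hu₀ hu₁)
  have hgap := log_sum_mul_exp_sub_sum_mul_le (c := c) hu₀ hu₁
  rw [hsplit]
  calc _ ≤ |log abar - log A| + |log (∑ i, u i * exp (c i)) - ∑ i, u i * c i| := abs_add_le _ _
    _ ≤ _ := by rw [abs_of_nonneg hgap₀, ← hA_sub, one_div_mul_eq_div]; gcongr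

/-- Bound on the weighted relative-entropy-type sum for the normalized
multiplicative-weights update `a'ᵢ = aᵢ e^{−cᵢ}/Z`, in terms of the change of the
localization weights and the second-order exponential remainder. -/
theorem mw_relative_entropy_bound
    {n : ℕ} (a c φ φ' : Fin n → ℝ)
    (ha : ∀ i, 0 < a i) (hsum : ∑ i, a i = 1)
    (Z : ℝ) (hZ : Z = ∑ j, a j * Real.exp (-c j))
    (a' : Fin n → ℝ) (ha' : ∀ i, a' i = a i * Real.exp (-c i) / Z)
    (hφ : ∀ i, 0 ≤ φ i) (hφ' : ∀ i, 0 ≤ φ' i)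
    (abar abar' : ℝ)
    (habar_def : abar = ∑ i, φ i * a i) (habar'_def : abar' = ∑ i, φ' i * a' i)
    (u : Fin n → ℝ) (hu : ∀ i, u i = φ' i * a' i / abar')
    (m : ℝ) (hm : 0 < m) (habar_ge : m ≤ abar) (hφ'a_ge : m ≤ ∑ i, φ' i * a i)
    (habar' : 0 < abar') :
    |∑ i, u i * Real.log ((a' i / abar') / (a i / abar))|
      ≤ (1 / m) * |∑ i, (φ' i - φ i) * a i|
        + ∑ i, u i * (Real.exp (c i) - 1 - c i) :=
  mw_relative_entropy_bound_general a c φ φ' ha Z hZ a' ha' hφ' abar abar' habar_def habar'_def u hu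
    m hm habar_ge hφ'a_ge habar'
end

section
/- Let E be a finite-dimensional real inner product space and F : E → ℝ a three-times continuously differentiable function whose third derivative satisfies ‖D³F(x)‖ ≤ L for all x, where L > 0. Suppose x* ∈ E satisfies DF(x*) = 0 and the Hessian at x* satisfies D²F(x*)(h, h) ≥ σ‖h‖² for all h ∈ E, where σ > 0. Then for every x with ‖x − x*‖ ≤ σ/(2L), one has F(x) ≥ F(x*) + (σ/4)‖x − x*‖². -/
/-!
Along the segment `t ↦ x* + t • h`, the Hessian moves by at most `L * t * ‖h‖ ≤ σ / 2` in operator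
norm (mean value inequality for `D²F`, whose derivative is `D³F`), so the second derivative of
`t ↦ F (x* + t • h)` stays above `(σ / 2) * ‖h‖ ^ 2` on `[0, 1]`. Integrating this bound twice,
with zero initial slope because `x*` is critical, gives `F (x* + h) ≥ F x* + (σ / 4) * ‖h‖ ^ 2`.
-/

open scoped RealInnerProductSpace

open Set

section RealVariable

variable {a b : ℝ}

theorem sub_le_sub_of_hasDerivAt_le {f g f' g' : ℝ → ℝ} (hab : a ≤ b)
    (hf : ∀ t ∈ Icc a b, HasDerivAt f (f' t) t) (hg : ∀ t ∈ Icc a b, HasDerivAt g (g' t) t)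
    (hle : ∀ t ∈ Icc a b, f' t ≤ g' t) : f b - f a ≤ g b - g a := by
  have hderiv : ∀ t ∈ Icc a b, HasDerivAt (g - f) (g' t - f' t) t :=
    fun t ht => (hg t ht).sub (hf t ht)
  have hmono : MonotoneOn (g - f) (Icc a b) :=
    monotoneOn_of_hasDerivWithinAt_nonneg (convex_Icc a b)
      (fun t ht => (hderiv t ht).continuousAt.continuousWithinAt)
      (fun t ht => (hderiv t (interior_subset ht)).hasDerivWithinAt)
      (fun t ht => sub_nonneg.2 (hle t (interior_subset ht)))
  have hab' := hmono (left_mem_Icc.2 hab) (right_mem_Icc.2 hab) hab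
  simp only [Pi.sub_apply] at hab'
  linarith

theorem add_deriv_mul_add_sq_le_of_le_deriv2 {g g' g'' : ℝ → ℝ} {c : ℝ} (hab : a ≤ b)
    (hg : ∀ t ∈ Icc a b, HasDerivAt g (g' t) t) (hg' : ∀ t ∈ Icc a b, HasDerivAt g' (g'' t) t)
    (hc : ∀ t ∈ Icc a b, c ≤ g'' t) :
    g a + g' a * (b - a) + c / 2 * (b - a) ^ 2 ≤ g b := by
  have hslope : ∀ t ∈ Icc a b, g' a + c * (t - a) ≤ g' t := by
    intro t ht
    have hsub : Icc a t ⊆ Icc a b := Icc_subset_Icc_right ht.2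
    have hlin := sub_le_sub_of_hasDerivAt_le ht.1
      (fun s _ => (hasDerivAt_id s).const_mul c) (fun s hs => hg' s (hsub hs))
      (fun s hs => by simpa using hc s (hsub hs))
    simp only [id] at hlin
    linarith
  have hquad : ∀ t, HasDerivAt (fun s => g' a * s + c / 2 * (s - a) ^ 2)
      (g' a + c * (t - a)) t := by
    intro t
    have := ((hasDerivAt_id' t).const_mul (g' a)).add
      ((((hasDerivAt_id' t).sub_const a).pow 2).const_mul (c / 2))
    exact this.congr_deriv (by ring)
  have hcmp := sub_le_sub_of_hasDerivAt_le hab (fun t _ => hquad t) hg hslope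
  nlinarith

end RealVariable

section NormedSpace

variable {E : Type*} [NormedAddCommGroup E] [NormedSpace ℝ E]

theorem norm_iteratedFDeriv_sub_le {G : Type*} [NormedAddCommGroup G] [NormedSpace ℝ G]
    {f : E → G} {n : ℕ} (hf : ContDiff ℝ (n + 1) f) {L : ℝ}
    (hL : ∀ z, ‖iteratedFDeriv ℝ (n + 1) f z‖ ≤ L) (x y : E) :
    ‖iteratedFDeriv ℝ n f y - iteratedFDeriv ℝ n f x‖ ≤ L * ‖y - x‖ :=
  convex_univ.norm_image_sub_le_of_norm_fderiv_le
    (fun _ _ => (hf.differentiable_iteratedFDeriv (mod_cast lt_add_one n)).differentiableAt)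
    (fun z _ => norm_fderiv_iteratedFDeriv.trans_le (hL z)) (mem_univ x) (mem_univ y)

theorem iteratedFDeriv_two_apply_sub_le {F : E → ℝ} (hF : ContDiff ℝ 3 F) {L : ℝ}
    (hL : ∀ z, ‖iteratedFDeriv ℝ 3 F z‖ ≤ L) (x y h : E) :
    iteratedFDeriv ℝ 2 F x ![h, h] - L * ‖y - x‖ * ‖h‖ ^ 2 ≤ iteratedFDeriv ℝ 2 F y ![h, h] := by
  have hop := (iteratedFDeriv ℝ 2 F y - iteratedFDeriv ℝ 2 F x).le_opNorm ![h, h]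
  have hlip := norm_iteratedFDeriv_sub_le (n := 2) hF hL x y
  simp only [Fin.prod_univ_two, Matrix.cons_val_zero, Matrix.cons_val_one,
    sub_apply, Real.norm_eq_abs] at hop
  have hlower := (abs_le.1 hop).1
  nlinarith [mul_self_nonneg ‖h‖]

theorem hasDerivAt_comp_add_smul {G : Type*} [NormedAddCommGroup G] [NormedSpace ℝ G]
    {f : E → G} {x h : E} {t : ℝ} (hf : DifferentiableAt ℝ f (x + t • h)) :
    HasDerivAt (fun s : ℝ => f (x + s • h)) (fderiv ℝ f (x + t • h) h) t := by
  have hline : HasDerivAt (fun s : ℝ => x + s • h) h t := by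
    simpa using ((hasDerivAt_id t).smul_const h).const_add x
  exact hf.hasFDerivAt.comp_hasDerivAt t hline

theorem hasDerivAt_fderiv_comp_add_smul_apply {F : E → ℝ} (hF : ContDiff ℝ 2 F) (x h : E)
    (t : ℝ) : HasDerivAt (fun s : ℝ => fderiv ℝ F (x + s • h) h)
      (iteratedFDeriv ℝ 2 F (x + t • h) ![h, h]) t := by
  have hD2 : Differentiable ℝ (fderiv ℝ F) :=
    (hF.fderiv_right (m := 1) (by norm_num)).differentiable (by norm_num)
  have := (hasDerivAt_comp_add_smul (hD2 (x + t • h))).clm_apply (hasDerivAt_const t h)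
  rw [iteratedFDeriv_two_apply]
  simpa using this

theorem add_fderiv_add_le_of_le_iteratedFDeriv_two {F : E → ℝ} (hF : ContDiff ℝ 2 F)
    (x h : E) {c : ℝ} (hc : ∀ t ∈ Icc (0 : ℝ) 1, c ≤ iteratedFDeriv ℝ 2 F (x + t • h) ![h, h]) :
    F x + fderiv ℝ F x h + c / 2 ≤ F (x + h) := by
  have := add_deriv_mul_add_sq_le_of_le_deriv2 zero_le_one
    (fun _ _ => hasDerivAt_comp_add_smul ((hF.differentiable (by norm_num)) _))
    (fun t _ => hasDerivAt_fderiv_comp_add_smul_apply hF x h t) hc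
  simpa using this

end NormedSpace

theorem quadratic_growth_near_nondegenerate_min_general
    {E : Type*} [NormedAddCommGroup E] [InnerProductSpace ℝ E]
    (F : E → ℝ) (hF : ContDiff ℝ 3 F)
    (L : ℝ) (hL : 0 < L)
    (hDF3 : ∀ x : E, ‖iteratedFDeriv ℝ 3 F x‖ ≤ L)
    (xstar : E) (hcrit : fderiv ℝ F xstar = 0)
    (σ : ℝ)
    (hhess : ∀ h : E, σ * ‖h‖ ^ 2 ≤ iteratedFDeriv ℝ 2 F xstar ![h, h]) :
    ∀ x : E, ‖x - xstar‖ ≤ σ / (2 * L) →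
      F x ≥ F xstar + (σ / 4) * ‖x - xstar‖ ^ 2 := by
  intro x hx
  set h := x - xstar
  have hLh : L * ‖h‖ ≤ σ / 2 := by
    rw [le_div_iff₀ (by positivity)] at hx
    linarith
  have hHess : ∀ t ∈ Icc (0 : ℝ) 1,
      σ / 2 * ‖h‖ ^ 2 ≤ iteratedFDeriv ℝ 2 F (xstar + t • h) ![h, h] := by
    intro t ht
    have hpert := iteratedFDeriv_two_apply_sub_le hF hDF3 xstar (xstar + t • h) h
    have hdist : L * ‖xstar + t • h - xstar‖ ≤ σ / 2 := by
      rw [add_sub_cancel_left, norm_smul, Real.norm_of_nonneg ht.1]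
      nlinarith [mul_nonneg (sub_nonneg.2 ht.2) (mul_nonneg hL.le (norm_nonneg h))]
    nlinarith [hhess h, sq_nonneg ‖h‖]
  have hgrowth :=
    add_fderiv_add_le_of_le_iteratedFDeriv_two (hF.of_le (by norm_num)) xstar h hHess
  rw [hcrit, add_sub_cancel] at hgrowth
  simp only [zero_apply, add_zero] at hgrowth
  linarith

/-- If `F` is `C³` with third derivative bounded by `L`, has a critical point `x*`
whose Hessian is `σ`-positive definite, then `F` grows at least quadratically,
with constant `σ/4`, on the ball of radius `σ/(2L)` around `x*`. -/
theorem quadratic_growth_near_nondegenerate_min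
    {E : Type*} [NormedAddCommGroup E] [InnerProductSpace ℝ E]
    [FiniteDimensional ℝ E]
    (F : E → ℝ) (hF : ContDiff ℝ 3 F)
    (L : ℝ) (hL : 0 < L)
    (hDF3 : ∀ x : E, ‖iteratedFDeriv ℝ 3 F x‖ ≤ L)
    (xstar : E) (hcrit : fderiv ℝ F xstar = 0)
    (σ : ℝ) (hσ : 0 < σ)
    (hhess : ∀ h : E, σ * ‖h‖ ^ 2 ≤ iteratedFDeriv ℝ 2 F xstar ![h, h]) :
    ∀ x : E, ‖x - xstar‖ ≤ σ / (2 * L) →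
      F x ≥ F xstar + (σ / 4) * ‖x - xstar‖ ^ 2 :=
  quadratic_growth_near_nondegenerate_min_general F hF L hL hDF3 xstar hcrit σ hhess
end

section
/- Let E be a finite-dimensional real inner product space and F : E → ℝ a three-times continuously differentiable function whose third derivative satisfies ‖D³F(x)‖ ≤ L for all x, where L > 0. Suppose x* ∈ E satisfies DF(x*) = 0 and D²F(x*)(h, h) ≥ σ‖h‖² for all h ∈ E, where σ > 0. Then for every x with ‖x − x*‖ ≤ σ/(2L), one has ⟨x − x*, ∇F(x)⟩ ≥ (σ/2)‖x − x*‖². -/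
/-!
Since `‖D³F‖ ≤ L`, the Hessian `D²F` is `L`-Lipschitz, so on the ball of radius `σ / (2L)`
around `x*` the quadratic form `h ↦ D²F(y)(h, h)` is still bounded below by `(σ/2)‖h‖²`.
With `v = x - x*`, the function `t ↦ DF(x* + t v)(v)` vanishes at `0` (as `x*` is critical)
and has derivative `D²F(x* + t v)(v, v)`; the mean value theorem on `[0, 1]` then gives
`⟪v, ∇F(x)⟫ = DF(x)(v) ≥ (σ/2)‖v‖²`.
-/

open scoped RealInnerProductSpace

section IteratedFDeriv

variable {E G : Type*} [NormedAddCommGroup E] [NormedSpace ℝ E]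
  [NormedAddCommGroup G] [NormedSpace ℝ G]

theorem ContinuousMultilinearMap.norm_apply_diag_two_le
    (A : ContinuousMultilinearMap ℝ (fun _ : Fin 2 => E) G) (v : E) :
    ‖A ![v, v]‖ ≤ ‖A‖ * ‖v‖ ^ 2 := by
  refine A.le_opNorm_mul_pow_of_le ((pi_norm_le_iff_of_nonneg (norm_nonneg v)).2 ?_)
  simp [Fin.forall_fin_two]

theorem norm_iteratedFDeriv_two_sub_le {F : E → G} (hF : ContDiff ℝ 3 F) {L : ℝ}
    (hDF3 : ∀ x, ‖iteratedFDeriv ℝ 3 F x‖ ≤ L) (x y : E) :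
    ‖iteratedFDeriv ℝ 2 F y - iteratedFDeriv ℝ 2 F x‖ ≤ L * ‖y - x‖ :=
  convex_univ.norm_image_sub_le_of_norm_fderiv_le
    (fun z _ => hF.differentiable_iteratedFDeriv (by norm_num) z)
    (fun z _ => (norm_fderiv_iteratedFDeriv (n := 2)).trans_le (hDF3 z))
    (Set.mem_univ x) (Set.mem_univ y)

theorem hasDerivAt_fderiv_add_smul_apply {F : E → G} (hF : ContDiff ℝ 2 F) (x v : E) (t : ℝ) :
    HasDerivAt (fun s : ℝ => fderiv ℝ F (x + s • v) v)
      (iteratedFDeriv ℝ 2 F (x + t • v) ![v, v]) t := by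
  have hline : HasDerivAt (fun s : ℝ => x + s • v) v t := by
    simpa using ((hasDerivAt_id t).smul_const v).const_add x
  have hDF : DifferentiableAt ℝ (fderiv ℝ F) (x + t • v) :=
    (hF.fderiv_right (m := 1) (by norm_num)).differentiable (by norm_num) _
  rw [iteratedFDeriv_two_apply]
  exact ((ContinuousLinearMap.apply ℝ G v).hasFDerivAt.comp _ hDF.hasFDerivAt).comp_hasDerivAt
    t hline

end IteratedFDeriv

section RealValued

variable {E : Type*} [NormedAddCommGroup E] [NormedSpace ℝ E]

theorem iteratedFDeriv_two_apply_diag_ge {F : E → ℝ} (hF : ContDiff ℝ 3 F) {L : ℝ}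
    (hDF3 : ∀ x, ‖iteratedFDeriv ℝ 3 F x‖ ≤ L) (x y v : E) :
    iteratedFDeriv ℝ 2 F x ![v, v] - L * ‖y - x‖ * ‖v‖ ^ 2 ≤ iteratedFDeriv ℝ 2 F y ![v, v] := by
  have hdiff := (iteratedFDeriv ℝ 2 F y - iteratedFDeriv ℝ 2 F x).norm_apply_diag_two_le v
  have hlip := norm_iteratedFDeriv_two_sub_le hF hDF3 x y
  rw [sub_apply, Real.norm_eq_abs] at hdiff
  nlinarith [neg_abs_le (iteratedFDeriv ℝ 2 F y ![v, v] - iteratedFDeriv ℝ 2 F x ![v, v]),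
    sq_nonneg ‖v‖]

theorem exists_fderiv_apply_sub_eq_iteratedFDeriv_two {F : E → ℝ} (hF : ContDiff ℝ 2 F)
    (x v : E) : ∃ c ∈ Set.Ioo (0 : ℝ) 1,
      fderiv ℝ F (x + v) v - fderiv ℝ F x v = iteratedFDeriv ℝ 2 F (x + c • v) ![v, v] := by
  have hderiv := hasDerivAt_fderiv_add_smul_apply hF x v
  obtain ⟨c, hc, hslope⟩ := exists_hasDerivAt_eq_slope _ _ one_pos
    (fun t _ => (hderiv t).continuousAt.continuousWithinAt) (fun t _ => hderiv t)
  exact ⟨c, hc, by simpa using hslope.symm⟩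

end RealValued

theorem gradient_correlation_near_nondegenerate_min_general
    {E : Type*} [NormedAddCommGroup E] [InnerProductSpace ℝ E]
    [FiniteDimensional ℝ E]
    (F : E → ℝ) (hF : ContDiff ℝ 3 F)
    (L : ℝ) (hL : 0 < L)
    (hDF3 : ∀ x : E, ‖iteratedFDeriv ℝ 3 F x‖ ≤ L)
    (xstar : E) (hcrit : fderiv ℝ F xstar = 0)
    (σ : ℝ)
    (hhess : ∀ h : E, σ * ‖h‖ ^ 2 ≤ iteratedFDeriv ℝ 2 F xstar ![h, h]) :
    ∀ x : E, ‖x - xstar‖ ≤ σ / (2 * L) →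
      ⟪x - xstar, gradient F x⟫ ≥ (σ / 2) * ‖x - xstar‖ ^ 2 := by
  intro x hx
  set v := x - xstar
  obtain ⟨c, ⟨hc0, hc1⟩, hmvt⟩ :=
    exists_fderiv_apply_sub_eq_iteratedFDeriv_two (hF.of_le (by norm_num)) xstar v
  have hnear : L * ‖(xstar + c • v) - xstar‖ ≤ σ / 2 := by
    rw [add_sub_cancel_left, norm_smul, Real.norm_of_nonneg hc0.le]
    calc L * (c * ‖v‖) ≤ L * ‖v‖ := by gcongr; exact mul_le_of_le_one_left (norm_nonneg v) hc1.le
      _ ≤ L * (σ / (2 * L)) := by gcongr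
      _ = σ / 2 := by field_simp
  have hhess_near := iteratedFDeriv_two_apply_diag_ge hF hDF3 xstar (xstar + c • v) v
  rw [real_inner_comm, inner_gradient_left, ← add_sub_cancel xstar x]
  simp only [hcrit, zero_apply, sub_zero] at hmvt
  nlinarith [hhess v, sq_nonneg ‖v‖]

/-- If `F` is `C³` with third derivative bounded by `L`, has a critical point `x*`
whose Hessian is `σ`-positive definite, then on the ball of radius `σ/(2L)` around
`x*` the gradient satisfies the correlation bound
`⟪x − x*, ∇F(x)⟫ ≥ (σ/2)‖x − x*‖²`. -/
theorem gradient_correlation_near_nondegenerate_min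
    {E : Type*} [NormedAddCommGroup E] [InnerProductSpace ℝ E]
    [FiniteDimensional ℝ E]
    (F : E → ℝ) (hF : ContDiff ℝ 3 F)
    (L : ℝ) (hL : 0 < L)
    (hDF3 : ∀ x : E, ‖iteratedFDeriv ℝ 3 F x‖ ≤ L)
    (xstar : E) (hcrit : fderiv ℝ F xstar = 0)
    (σ : ℝ) (hσ : 0 < σ)
    (hhess : ∀ h : E, σ * ‖h‖ ^ 2 ≤ iteratedFDeriv ℝ 2 F xstar ![h, h]) :
    ∀ x : E, ‖x - xstar‖ ≤ σ / (2 * L) →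
      ⟪x - xstar, gradient F x⟫ ≥ (σ / 2) * ‖x - xstar‖ ^ 2 :=
  gradient_correlation_near_nondegenerate_min_general F hF L hL hDF3 xstar hcrit σ hhess
end
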